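/- arXiv:1502.03999 — 5 statements merged into one kernel-verified Lean document; each statement's English description precedes it below -/
import Mathlib

section
/- Let α be a nonzero complex number and n ≥ 2. Let G = ℂ^{n−1} ⋊_φ ℤ be the semidirect product of the additive group of row vectors ℂ^{n−1} with ℤ, where φ(k)(a) = α^k · a · J_{n−1}^k, so that (a₁, k₁)(a₂, k₂) = (a₁ + α^{k₁} a₂ J_{n−1}^{k₁}, k₁ + k₂). Then the map Θ : G → GL(n,ℂ) sending (a, k) to the block matrix with (1,1)-entry α^k, first-row tail a·J_{n−1}^{−k}, lower-right (n−1)×(n−1) block J_{n−1}^{−k}, and zeros in the rest of the first column, is a group homomorphism; moreover, if n ≥ 3 then Θ is injective. -/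
open Matrix

noncomputable section

/-- Generalized binomial coefficient C(m,k) for m : ℤ, as a complex number. -/
def gbinom (m : ℤ) (k : ℕ) : ℂ :=
  (∏ i ∈ Finset.range k, ((m : ℂ) - i)) / (Nat.factorial k)

/-- The n×n nilpotent Jordan matrix N. -/
def Nmat (n : ℕ) : Matrix (Fin n) (Fin n) ℂ :=
  Matrix.of fun i j => if (i : ℕ) + 1 = (j : ℕ) then 1 else 0

/-- The unipotent Jordan block J = I + N. -/
def Jmat (n : ℕ) : Matrix (Fin n) (Fin n) ℂ := 1 + Nmat n

lemma Jmat_blockTriangular (n : ℕ) : (Jmat n).BlockTriangular id := by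
  intro i j hij
  have hji : (j : ℕ) < (i : ℕ) := hij
  simp only [Jmat, Matrix.add_apply, Matrix.one_apply, Nmat, Matrix.of_apply]
  rw [if_neg (by intro h; subst h; exact lt_irrefl _ hji), if_neg (by omega)]
  simp

lemma Jmat_isUnit (n : ℕ) : IsUnit (Jmat n) := by
  rw [Matrix.isUnit_iff_isUnit_det,
    Matrix.det_of_upperTriangular (Jmat_blockTriangular n)]
  have : ∀ i : Fin n, Jmat n i i = 1 := by
    intro i
    simp [Jmat, Matrix.one_apply, Nmat]
  simp [this]

/-- Integer powers (positive and negative) of the unipotent Jordan block. -/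
def Jz (n : ℕ) (m : ℤ) : Matrix (Fin n) (Fin n) ℂ :=
  (((Jmat_isUnit n).unit ^ m : (Matrix (Fin n) (Fin n) ℂ)ˣ) : Matrix (Fin n) (Fin n) ℂ)


/-- The map Θ from the semidirect product `ℂ^{n−1} ⋊ ℤ` (with `(a₁,k₁)(a₂,k₂) =
(a₁ + α^{k₁} a₂ J^{k₁}, k₁+k₂)`) to GL(n,ℂ), written as a block matrix. -/
def Theta (α : ℂ) (m : ℕ) (a : Fin m → ℂ) (k : ℤ) :
    Matrix (Fin 1 ⊕ Fin m) (Fin 1 ⊕ Fin m) ℂ :=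
  Matrix.fromBlocks (Matrix.of fun _ _ => α ^ k)
    (Matrix.of fun _ j => Matrix.vecMul a (Jz m (-k)) j)
    0 (Jz m (-k))

/-!
Multiplicativity of Θ is a block-matrix computation resting on `J^(a+b) = J^a J^b`; the scalar
corner needs `α ≠ 0` for `α^(k₁+k₂) = α^k₁ α^k₂`. For injectivity the lower-right block gives
`J^(-k)`, and `k` can be read off it as soon as `J` has size at least 2: from `J e₀ = e₀` and
`J e₁ = e₁ + e₀` one gets `J^z e₁ = e₁ + z e₀`. Knowing `k`, the first row `a J^(-k)` gives `a`.
-/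

section UnitsMulVec

variable {ι R : Type*} [Fintype ι] [DecidableEq ι] [CommRing R]

theorem Matrix.units_zpow_mulVec_of_mulVec_eq (u : (Matrix ι ι R)ˣ) {v : ι → R}
    (hv : (u : Matrix ι ι R) *ᵥ v = v) (z : ℤ) :
    ((u ^ z : (Matrix ι ι R)ˣ) : Matrix ι ι R) *ᵥ v = v := by
  have hinv : ((u⁻¹ : (Matrix ι ι R)ˣ) : Matrix ι ι R) *ᵥ v = v := by
    conv_lhs => rw [← hv]
    rw [Matrix.mulVec_mulVec, Units.inv_mul, Matrix.one_mulVec]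
  induction z using Int.induction_on with
  | zero => simp
  | succ k ih => rw [_root_.zpow_add_one, Units.val_mul, ← Matrix.mulVec_mulVec, hv, ih]
  | pred k ih => rw [_root_.zpow_sub_one, Units.val_mul, ← Matrix.mulVec_mulVec, hinv, ih]

theorem Matrix.units_zpow_mulVec_of_mulVec_eq_add (u : (Matrix ι ι R)ˣ) {v w : ι → R}
    (hv : (u : Matrix ι ι R) *ᵥ v = v) (hw : (u : Matrix ι ι R) *ᵥ w = w + v) (z : ℤ) :
    ((u ^ z : (Matrix ι ι R)ˣ) : Matrix ι ι R) *ᵥ w = w + (z : R) • v := by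
  have hinv : ((u⁻¹ : (Matrix ι ι R)ˣ) : Matrix ι ι R) *ᵥ w = w - v := by
    have : (u : Matrix ι ι R) *ᵥ (w - v) = w := by
      rw [Matrix.mulVec_sub, hw, hv, add_sub_cancel_right]
    conv_lhs => rw [← this]
    rw [Matrix.mulVec_mulVec, Units.inv_mul, Matrix.one_mulVec]
  induction z using Int.induction_on with
  | zero => simp
  | succ k ih =>
    rw [_root_.zpow_add_one, Units.val_mul, ← Matrix.mulVec_mulVec, hw, Matrix.mulVec_add, ih,
      Matrix.units_zpow_mulVec_of_mulVec_eq u hv]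
    push_cast; module
  | pred k ih =>
    rw [_root_.zpow_sub_one, Units.val_mul, ← Matrix.mulVec_mulVec, hinv, Matrix.mulVec_sub, ih,
      Matrix.units_zpow_mulVec_of_mulVec_eq u hv]
    push_cast; module

end UnitsMulVec

theorem Jz_add (m : ℕ) (a b : ℤ) : Jz m (a + b) = Jz m a * Jz m b := by
  simp [Jz, _root_.zpow_add, Units.val_mul]

theorem Jz_zero (m : ℕ) : Jz m 0 = 1 := by simp [Jz]

theorem Jz_mul_Jz_neg (m : ℕ) (z : ℤ) : Jz m z * Jz m (-z) = 1 := by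
  rw [← Jz_add, add_neg_cancel, Jz_zero]

theorem Jz_mulVec_single_one (m : ℕ) (z : ℤ) :
    Jz (m + 2) z *ᵥ Pi.single 1 1 = Pi.single 1 1 + (z : ℂ) • Pi.single 0 1 := by
  have hunit : ((Jmat_isUnit (m + 2)).unit : Matrix (Fin (m + 2)) (Fin (m + 2)) ℂ) =
      Jmat (m + 2) := IsUnit.unit_spec _
  refine Matrix.units_zpow_mulVec_of_mulVec_eq_add _ ?_ ?_ z <;> rw [hunit] <;> ext i <;>
    simp [Jmat, Nmat, Matrix.one_apply, Pi.single_apply, Matrix.mulVec, dotProduct]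

theorem Jz_injective {m : ℕ} (hm : 2 ≤ m) : Function.Injective (Jz m) := by
  obtain ⟨m, rfl⟩ : ∃ k, m = k + 2 := ⟨m - 2, by omega⟩
  intro z₁ z₂ h
  have hcol := congrArg (· *ᵥ (Pi.single 1 1 : Fin (m + 2) → ℂ)) h
  simp only [Jz_mulVec_single_one] at hcol
  simpa using congrFun hcol 0

theorem isUnit_Theta {α : ℂ} (hα : α ≠ 0) (m : ℕ) (a : Fin m → ℂ) (k : ℤ) :
    IsUnit (Theta α m a k) := by
  rw [Matrix.isUnit_iff_isUnit_det, Theta, Matrix.det_fromBlocks_zero₂₁, Matrix.det_fin_one]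
  refine (isUnit_iff_ne_zero.mpr (zpow_ne_zero k hα)).mul ?_
  exact (Matrix.isUnit_iff_isUnit_det _).mp ⟨(Jmat_isUnit m).unit ^ (-k), rfl⟩

theorem Theta_mul {α : ℂ} (hα : α ≠ 0) (m : ℕ) (a₁ a₂ : Fin m → ℂ) (k₁ k₂ : ℤ) :
    Theta α m (a₁ + α ^ k₁ • Matrix.vecMul a₂ (Jz m k₁)) (k₁ + k₂)
      = Theta α m a₁ k₁ * Theta α m a₂ k₂ := by
  have hJ : Jz m (-(k₁ + k₂)) = Jz m (-k₁) * Jz m (-k₂) := by rw [← Jz_add, neg_add, add_comm]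
  have hJ' : Jz m k₁ * Jz m (-(k₁ + k₂)) = Jz m (-k₂) := by
    rw [hJ, ← Matrix.mul_assoc, Jz_mul_Jz_neg, Matrix.one_mul]
  rw [Theta, Theta, Theta, Matrix.fromBlocks_multiply, Matrix.fromBlocks_inj]
  refine ⟨?_, ?_, by simp, by simpa using hJ⟩
  · ext
    simp [Matrix.mul_apply, zpow_add₀ hα]
  · have hrow : Matrix.vecMul (a₁ + α ^ k₁ • Matrix.vecMul a₂ (Jz m k₁)) (Jz m (-(k₁ + k₂)))
        = α ^ k₁ • Matrix.vecMul a₂ (Jz m (-k₂))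
          + Matrix.vecMul (Matrix.vecMul a₁ (Jz m (-k₁))) (Jz m (-k₂)) := by
      rw [Matrix.add_vecMul, Matrix.smul_vecMul, Matrix.vecMul_vecMul, hJ', hJ,
        ← Matrix.vecMul_vecMul, add_comm]
    ext _ j
    simp only [Matrix.of_apply, Matrix.add_apply, Matrix.mul_apply, Finset.univ_unique,
      Finset.sum_singleton]
    exact congrFun hrow j

theorem Theta_injective {α : ℂ} {m : ℕ} (hm : 2 ≤ m) {a₁ a₂ : Fin m → ℂ} {k₁ k₂ : ℤ}
    (h : Theta α m a₁ k₁ = Theta α m a₂ k₂) : a₁ = a₂ ∧ k₁ = k₂ := by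
  rw [Theta, Theta, Matrix.fromBlocks_inj] at h
  obtain ⟨-, hrow, -, hJ⟩ := h
  obtain rfl : k₁ = k₂ := neg_injective (Jz_injective hm hJ)
  refine ⟨?_, rfl⟩
  have hvec : Matrix.vecMul a₁ (Jz m (-k₁)) = Matrix.vecMul a₂ (Jz m (-k₁)) :=
    funext fun j => congrFun (congrFun hrow 0) j
  simpa [Matrix.vecMul_vecMul, ← Jz_add, Jz_zero] using congrArg (Matrix.vecMul · (Jz m k₁)) hvec

theorem stmt3_general (α : ℂ) (hα : α ≠ 0) (n : ℕ) :
    (∀ a k, IsUnit (Theta α (n - 1) a k))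
    ∧ (∀ (a₁ a₂ : Fin (n - 1) → ℂ) (k₁ k₂ : ℤ),
        Theta α (n - 1) (a₁ + α ^ k₁ • Matrix.vecMul a₂ (Jz (n - 1) k₁)) (k₁ + k₂)
          = Theta α (n - 1) a₁ k₁ * Theta α (n - 1) a₂ k₂)
    ∧ (3 ≤ n → ∀ (a₁ a₂ : Fin (n - 1) → ℂ) (k₁ k₂ : ℤ),
        Theta α (n - 1) a₁ k₁ = Theta α (n - 1) a₂ k₂ → a₁ = a₂ ∧ k₁ = k₂) :=
  ⟨isUnit_Theta hα _, Theta_mul hα _, fun hn _ _ _ _ => Theta_injective (by omega)⟩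

/-- Θ is a group homomorphism from `ℂ^{n−1} ⋊ ℤ` to GL(n,ℂ) (its values are invertible
matrices and it is multiplicative for the semidirect product law); moreover if `n ≥ 3`
then Θ is injective. -/
theorem stmt3 (α : ℂ) (hα : α ≠ 0) (n : ℕ) (hn : 2 ≤ n) :
    (∀ a k, IsUnit (Theta α (n - 1) a k))
    ∧ (∀ (a₁ a₂ : Fin (n - 1) → ℂ) (k₁ k₂ : ℤ),
        Theta α (n - 1) (a₁ + α ^ k₁ • Matrix.vecMul a₂ (Jz (n - 1) k₁)) (k₁ + k₂)
          = Theta α (n - 1) a₁ k₁ * Theta α (n - 1) a₂ k₂)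
    ∧ (3 ≤ n → ∀ (a₁ a₂ : Fin (n - 1) → ℂ) (k₁ k₂ : ℤ),
        Theta α (n - 1) a₁ k₁ = Theta α (n - 1) a₂ k₂ → a₁ = a₂ ∧ k₁ = k₂) :=
  stmt3_general α hα n

end
end

section
/- Let Γ be a group, h : Γ → ℤ a group homomorphism, α a nonzero complex number, n ≥ 2, and let z̃ = (z̃_1, …, z̃_{n−1}) : Γ → ℂ^{n−1} satisfy z̃(γ₁γ₂) = z̃(γ₁) + α^{h(γ₁)} z̃(γ₂) J_{n−1}^{h(γ₁)} for all γ₁, γ₂ ∈ Γ. Then for each 1 ≤ k ≤ n−1 and all γ₁, γ₂ ∈ Γ: z̃_k(γ₁γ₂) = z̃_k(γ₁) + α^{h(γ₁)} z̃_k(γ₂) + Σ_{i=1}^{k−1} h_i(γ₁) α^{h(γ₁)} z̃_{k−i}(γ₂); equivalently δz̃_k + Σ_{i=1}^{k−1} h_i ⌣ z̃_{k−i} = 0. In particular z̃_1(γ₁γ₂) = z̃_1(γ₁) + α^{h(γ₁)} z̃_1(γ₂), i.e. z̃_1 is a derivation with coefficients in ℂ_α. -/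
open Matrix

noncomputable section

/-! `J^m` is the upper-triangular Toeplitz matrix with entries `C(m, j - i)`: this holds at
`m = 0`, and right multiplication by `J = I + N` is exactly Pascal's rule
`C(m+1, d+1) = C(m, d) + C(m, d+1)`, so the two agree on all of `ℤ`. The `k`-th coordinate
of `z̃(γ₂) J^{h(γ₁)}` is then `Σ_{i ≤ k} C(h(γ₁), i) z̃_{k-i}(γ₂)`, which is the component
formula. -/

lemma gbinom_eq_choose (m : ℤ) (k : ℕ) : gbinom m k = ((Ring.choose m k : ℤ) : ℂ) := by
  have hfact := Ring.descPochhammer_eq_factorial_smul_choose m k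
  rw [← Polynomial.eval_eq_smeval, descPochhammer_eval_eq_prod_range, nsmul_eq_mul] at hfact
  have hk : (k.factorial : ℂ) ≠ 0 := Nat.cast_ne_zero.2 k.factorial_ne_zero
  rw [gbinom, div_eq_iff hk, mul_comm]
  exact_mod_cast hfact

lemma gbinom_zero_right (m : ℤ) : gbinom m 0 = 1 := by
  simp [gbinom]

lemma gbinom_succ_succ (m : ℤ) (k : ℕ) :
    gbinom (m + 1) (k + 1) = gbinom m k + gbinom m (k + 1) := by
  simp only [gbinom_eq_choose, Ring.choose_succ_succ, Int.cast_add]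

lemma gbinom_zero_succ (k : ℕ) : gbinom 0 (k + 1) = 0 := by
  simp [gbinom_eq_choose]

lemma Units.eq_val_zpow_of_add_one {M : Type*} [Monoid M] (u : Mˣ) (f : ℤ → M) (h0 : f 0 = 1)
    (hsucc : ∀ m, f (m + 1) = f m * u) (m : ℤ) : f m = ↑(u ^ m) := by
  induction m using Int.induction_on with
  | zero => rw [h0, zpow_zero, Units.val_one]
  | succ k ih => rw [hsucc, ih, _root_.zpow_add_one, Units.val_mul]
  | pred k ih =>
    rw [_root_.zpow_sub_one, Units.val_mul, ← ih, ← sub_add_cancel (-(k : ℤ)) 1, hsucc,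
      sub_add_cancel, mul_assoc, Units.mul_inv, mul_one]

def binomMatrix (n : ℕ) (m : ℤ) : Matrix (Fin n) (Fin n) ℂ :=
  Matrix.of fun i j => if i ≤ j then gbinom m (j - i : ℕ) else 0

lemma mul_Nmat_apply {n : ℕ} (A : Matrix (Fin n) (Fin n) ℂ) (i j : Fin n) :
    (A * Nmat n) i j = if hj : 0 < (j : ℕ) then A i ⟨j - 1, by omega⟩ else 0 := by
  simp only [Matrix.mul_apply, Nmat, Matrix.of_apply, mul_ite, mul_one, mul_zero]
  split_ifs with hj
  · have hl : ∀ l : Fin n, (l : ℕ) + 1 = j ↔ l = ⟨j - 1, by omega⟩ := fun l => by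
      rw [Fin.ext_iff]; show _ ↔ (l : ℕ) = j - 1; omega
    simp only [hl, Finset.sum_ite_eq', Finset.mem_univ, if_true]
  · exact Finset.sum_eq_zero fun l _ => if_neg (by omega)

lemma binomMatrix_zero (n : ℕ) : binomMatrix n 0 = 1 := by
  ext i j
  simp only [binomMatrix, Matrix.of_apply, Matrix.one_apply]
  rcases lt_trichotomy i j with hij | rfl | hji
  · obtain ⟨d, hd⟩ : ∃ d, (j - i : ℕ) = d + 1 := ⟨j - i - 1, by omega⟩
    rw [if_pos hij.le, if_neg hij.ne, hd, gbinom_zero_succ]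
  · rw [if_pos le_rfl, if_pos rfl, Nat.sub_self, gbinom_zero_right]
  · rw [if_neg hji.not_ge, if_neg hji.ne']

lemma binomMatrix_mul_Jmat (n : ℕ) (m : ℤ) :
    binomMatrix n m * Jmat n = binomMatrix n (m + 1) := by
  ext i j
  rw [Jmat, mul_add, mul_one, Matrix.add_apply, mul_Nmat_apply]
  simp only [binomMatrix, Matrix.of_apply]
  split_ifs with hij hj hij'
  · change (i : ℕ) ≤ j - 1 at hij'
    obtain ⟨d, hd⟩ : ∃ d, (j - i : ℕ) = d + 1 := ⟨j - 1 - i, by omega⟩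
    rw [hd, show (j - 1 - i : ℕ) = d by omega, gbinom_succ_succ, add_comm]
  · change ¬(i : ℕ) ≤ j - 1 at hij'
    rw [show (j - i : ℕ) = 0 by omega, gbinom_zero_right, gbinom_zero_right, add_zero]
  · rw [show (j - i : ℕ) = 0 by omega, gbinom_zero_right, gbinom_zero_right, add_zero]
  · rename_i hij'
    exact absurd (hij'.trans (Fin.le_def.2 (Nat.sub_le _ _))) hij
  all_goals rw [add_zero]

lemma Jz_eq_binomMatrix (n : ℕ) (m : ℤ) : Jz n m = binomMatrix n m :=
  (Units.eq_val_zpow_of_add_one _ (binomMatrix n) (binomMatrix_zero n)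
    (fun m => by rw [IsUnit.unit_spec, binomMatrix_mul_Jmat]) m).symm

lemma vecMul_Jz_apply {n : ℕ} (m : ℤ) (v : Fin n → ℂ) (k : Fin n) :
    Matrix.vecMul v (Jz n m) k
      = v k + ∑ i ∈ Finset.range k,
          gbinom m (i + 1) * v ⟨k - (i + 1), Nat.lt_of_le_of_lt (Nat.sub_le _ _) k.isLt⟩ := by
  have hreindex : ∑ i ∈ Finset.univ.filter (· ≤ k), v i * gbinom m (k - i : ℕ)
      = ∑ j ∈ Finset.range (k + 1),
          gbinom m j * v ⟨k - j, Nat.lt_of_le_of_lt (Nat.sub_le _ _) k.isLt⟩ := by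
    refine Finset.sum_nbij' (fun i => k - i)
      (fun j => ⟨k - j, Nat.lt_of_le_of_lt (Nat.sub_le _ _) k.isLt⟩) ?_ ?_ ?_ ?_ ?_
    · intro i hi
      rw [Finset.mem_filter_univ, Fin.le_def] at hi
      rw [Finset.mem_range]
      omega
    · intro j _
      exact (Finset.mem_filter_univ _).2 (Fin.le_def.2 (Nat.sub_le _ _))
    · intro i hi
      rw [Finset.mem_filter_univ, Fin.le_def] at hi
      exact Fin.ext (by dsimp only; omega)
    · intro j hj
      rw [Finset.mem_range] at hj
      simp only
      omega
    · intro i hi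
      rw [Finset.mem_filter_univ, Fin.le_def] at hi
      rw [mul_comm]
      congr
      exact Fin.ext (by dsimp only; omega)
  rw [Jz_eq_binomMatrix, Matrix.vecMul, dotProduct]
  simp only [binomMatrix, Matrix.of_apply, mul_ite, mul_zero]
  rw [← Finset.sum_filter, hreindex, Finset.sum_range_succ', gbinom_zero_right, one_mul, add_comm]
  rfl

/-- The component `k : Fin (n - 1)` is the paper's `z̃_{k+1}`. -/
theorem stmt5 (Γ : Type*) [Group Γ] (h : Γ → ℤ)
    (α : ℂ) (n : ℕ) (hn : 2 ≤ n) (ztil : Γ → Fin (n - 1) → ℂ)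
    (hz : ∀ γ₁ γ₂ : Γ,
      ztil (γ₁ * γ₂)
        = ztil γ₁ + α ^ h γ₁ • Matrix.vecMul (ztil γ₂) (Jz (n - 1) (h γ₁))) :
    (∀ (k : Fin (n - 1)) (γ₁ γ₂ : Γ),
      ztil (γ₁ * γ₂) k
        = ztil γ₁ k + α ^ h γ₁ * ztil γ₂ k
          + ∑ i ∈ Finset.range (k : ℕ),
              gbinom (h γ₁) (i + 1)
                * (α ^ h γ₁
                  * ztil γ₂ ⟨(k : ℕ) - (i + 1),
                      Nat.lt_of_le_of_lt (Nat.sub_le _ _) k.isLt⟩))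
    ∧ (∀ γ₁ γ₂ : Γ,
        ztil (γ₁ * γ₂) ⟨0, by omega⟩
          = ztil γ₁ ⟨0, by omega⟩ + α ^ h γ₁ * ztil γ₂ ⟨0, by omega⟩) := by
  refine ⟨fun k γ₁ γ₂ => ?_, fun γ₁ γ₂ => ?_⟩
  · rw [hz, Pi.add_apply, Pi.smul_apply, smul_eq_mul, vecMul_Jz_apply, mul_add, Finset.mul_sum,
      ← add_assoc]
    simp only [mul_left_comm]
  · simp [hz, vecMul_Jz_apply]

end
end

section
/- For every n ≥ 1, the matrix P_n satisfies P_n² = I_n (so P_n = P_n^{−1}), and P_n J_n P_n = J_n^{−1}, i.e. conjugation by P_n carries the unipotent Jordan block J_n to its inverse. -/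
open Matrix

noncomputable section

/-- The matrix `P_n` with entries `(P_n)_{ij} = (−1)^j · binom(j,i)` (1-based indices,
here realized with 0-based indices `i, j : Fin n` as `(−1)^{j+1} · binom(j+1, i+1)`). -/
def Pmat (n : ℕ) : Matrix (Fin n) (Fin n) ℂ :=
  Matrix.of fun i j =>
    (-1 : ℂ) ^ ((j : ℕ) + 1) * (Nat.choose ((j : ℕ) + 1) ((i : ℕ) + 1) : ℂ)

/-!
Let `Q` be the signed Pascal matrix `((-1) ^ j * binom(j, i))_{i, j ≥ 0}`. Binomial inversion,
`∑ j, (-1) ^ j * binom(k, j) * binom(j, i) = (-1) ^ i * δ_{ik}`, says that every truncation `Q_n`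
is an involution. `P_n` is `Q_{n+1}` with its first row and column deleted, and since `Q` is upper
triangular this deletion commutes with squaring, so `P_n² = 1`. Pascal's rule gives
`P_n J_n = -Q_n`, hence `(P_n J_n)² = 1`, which is `P_n J_n P_n = J_n⁻¹`.
-/

open Finset in
theorem sum_range_neg_one_pow_mul_choose_mul_choose {R : Type*} [CommRing R] (i k : ℕ) :
    ∑ j ∈ range (k + 1), (-1 : R) ^ j * ((k.choose j * j.choose i : ℕ) : R) =
      if i = k then (-1) ^ k else 0 := by
  rcases le_or_gt i k with hik | hki
  · obtain ⟨d, rfl⟩ := Nat.exists_eq_add_of_le hik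
    have hlow : ∀ j ∈ range i, (-1 : R) ^ j * (((i + d).choose j * j.choose i : ℕ) : R) = 0 :=
      fun j hj => by simp [Nat.choose_eq_zero_of_lt (mem_range.1 hj)]
    have hshift : ∀ t,
        (-1 : R) ^ (i + t) * (((i + d).choose (i + t) * (i + t).choose i : ℕ) : R) =
          (-1) ^ i * (i + d).choose i * ((-1) ^ t * d.choose t) := by
      intro t
      rw [Nat.choose_mul (Nat.le_add_right i t), Nat.add_sub_cancel_left, Nat.add_sub_cancel_left]
      push_cast
      ring
    have halt : ∑ t ∈ range (d + 1), (-1 : R) ^ t * d.choose t = 0 ^ d := by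
      simpa using (add_pow (-1 : R) 1 d).symm
    rw [add_assoc, sum_range_add, sum_eq_zero hlow, zero_add]
    simp only [hshift, ← mul_sum, halt]
    cases d <;> simp
  · rw [if_neg hki.ne', sum_eq_zero]
    intro j hj
    rw [Nat.choose_eq_zero_of_lt (n := j) (by grind), mul_zero, Nat.cast_zero, mul_zero]

theorem Matrix.submatrix_succ_mul_submatrix_succ {α : Type*} [NonUnitalNonAssocSemiring α]
    {n : ℕ} (A B : Matrix (Fin (n + 1)) (Fin (n + 1)) α) (hA : ∀ i : Fin n, A i.succ 0 = 0) :
    A.submatrix Fin.succ Fin.succ * B.submatrix Fin.succ Fin.succ =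
      (A * B).submatrix Fin.succ Fin.succ := by
  ext i k
  simp [mul_apply, Fin.sum_univ_succ, hA]

def signedPascal (R : Type*) [Ring R] (n : ℕ) : Matrix (Fin n) (Fin n) R :=
  of fun i j => (-1) ^ (j : ℕ) * ((j : ℕ).choose i : R)

theorem signedPascal_mul_self (R : Type*) [CommRing R] (n : ℕ) :
    signedPascal R n * signedPascal R n = 1 := by
  ext i k
  set f : ℕ → R := fun j => (-1) ^ j * (((k : ℕ).choose j * j.choose i : ℕ) : R)
  have hentry : ∀ j : Fin n,
      signedPascal R n i j * signedPascal R n j k = (-1) ^ (k : ℕ) * f j := by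
    intro j
    simp only [signedPascal, of_apply, f]
    push_cast
    ring
  have hvanish : ∀ j ∈ Finset.range n, j ∉ Finset.range (k + 1) → f j = 0 := by
    intro j _ hj
    rw [Finset.mem_range, not_lt] at hj
    simp [f, Nat.choose_eq_zero_of_lt hj]
  rw [mul_apply, Fintype.sum_congr _ _ hentry, ← Finset.mul_sum, Fin.sum_univ_eq_sum_range f,
    ← Finset.sum_subset (Finset.range_subset_range.2 k.isLt) hvanish,
    sum_range_neg_one_pow_mul_choose_mul_choose, one_apply]
  by_cases h : i = k
  · simp [h, ← pow_add]
  · simp [h, Fin.val_inj]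

theorem Pmat_eq_submatrix_signedPascal (n : ℕ) :
    Pmat n = (signedPascal ℂ (n + 1)).submatrix Fin.succ Fin.succ := by
  ext i j
  simp [Pmat, signedPascal]

theorem Pmat_mul_self (n : ℕ) : Pmat n * Pmat n = 1 := by
  rw [Pmat_eq_submatrix_signedPascal, Matrix.submatrix_succ_mul_submatrix_succ _ _
    (fun i => by simp [signedPascal]), signedPascal_mul_self,
    submatrix_one _ (Fin.succ_injective _)]

theorem mul_Nmat_apply_zero {m n : ℕ} (A : Matrix (Fin m) (Fin (n + 1)) ℂ) (i : Fin m) :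
    (A * Nmat (n + 1)) i 0 = 0 := by
  simp [mul_apply, Nmat]

theorem mul_Nmat_apply_succ {m n : ℕ} (A : Matrix (Fin m) (Fin (n + 1)) ℂ) (i : Fin m)
    (j : Fin n) : (A * Nmat (n + 1)) i j.succ = A i j.castSucc := by
  rw [mul_apply, Finset.sum_eq_single j.castSucc]
  · simp [Nmat]
  · intro x _ hx
    simp only [Nmat, of_apply, Fin.val_succ, add_left_inj, ← Fin.val_castSucc j, Fin.val_inj]
    simp [hx]
  · simp

theorem Pmat_mul_Jmat (n : ℕ) : Pmat n * Jmat n = -signedPascal ℂ n := by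
  cases n with
  | zero => exact Subsingleton.elim _ _
  | succ n =>
    ext i j
    rw [Jmat, mul_add, mul_one, Matrix.add_apply]
    cases j using Fin.cases with
    | zero => simp [mul_Nmat_apply_zero, Pmat, signedPascal, Nat.choose_succ_succ']
    | succ j =>
      simp only [mul_Nmat_apply_succ, Pmat, signedPascal, of_apply, Matrix.neg_apply, Fin.val_succ,
        Fin.val_castSucc]
      rw [Nat.choose_succ_succ' (j + 1)]
      push_cast
      ring

theorem Jz_neg_one (n : ℕ) : Jz n (-1) = (Jmat n)⁻¹ := by
  rw [Jz, _root_.zpow_neg_one, coe_units_inv, IsUnit.unit_spec]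

theorem stmt6_general (n : ℕ) :
    Pmat n * Pmat n = 1
    ∧ Pmat n = (Pmat n)⁻¹
    ∧ Pmat n * Jmat n * Pmat n = Jz n (-1) := by
  refine ⟨Pmat_mul_self n, (inv_eq_right_inv (Pmat_mul_self n)).symm, ?_⟩
  rw [Jz_neg_one]
  refine (inv_eq_left_inv ?_).symm
  calc Pmat n * Jmat n * Pmat n * Jmat n = (Pmat n * Jmat n) * (Pmat n * Jmat n) := by
        simp only [mul_assoc]
    _ = 1 := by rw [Pmat_mul_Jmat, neg_mul_neg, signedPascal_mul_self]

/-- `P_n² = I_n` (so `P_n = P_n^{−1}`) and `P_n J_n P_n = J_n^{−1}`. -/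
theorem stmt6 (n : ℕ) (hn : 1 ≤ n) :
    Pmat n * Pmat n = 1
    ∧ Pmat n = (Pmat n)⁻¹
    ∧ Pmat n * Jmat n * Pmat n = Jz n (-1) :=
  stmt6_general n

end
end

section
/- Let Γ, h, α, n, z_1, …, z_{n−1} and ϱ be as specified. Then C(0) (the span of E_1^n, …, E_n^n) and the line ℂ·E_1^n are invariant under the adjoint action γ·X = ϱ(γ) X ϱ(γ)^{−1} (indeed γ·E_1^n = α^{h(γ)} E_1^n), and there is a ℂ-linear isomorphism φ : ℂ[t^{±1}]/((t−1)^{n−1}) → C(0)/(ℂ·E_1^n), given on basis classes by (t−1)^l ↦ class of E_{n−l}^n for 0 ≤ l ≤ n−2, such that for every γ ∈ Γ and every p, φ(t^{h(γ)}·p) equals the class of ϱ(γ)·X·ϱ(γ)^{−1} where X is any lift of φ(p); i.e. φ intertwines multiplication by t^{h(γ)} with the induced adjoint action of γ. -/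
open Matrix LaurentPolynomial

noncomputable section

/-- The representation ϱ : Γ → GL(n,ℂ), with `ϱ(γ)_{1,1} = α^{h(γ)}`,
`ϱ(γ)_{1,j} = z_{j−1}(γ)` for `2 ≤ j ≤ n`, `ϱ(γ)_{i,1} = 0` for `2 ≤ i ≤ n`, and
`ϱ(γ)_{i,j} = (J_{n−1}^{h(γ)})_{i−1,j−1}` for `2 ≤ i, j ≤ n` (1-based indices). -/
def rhoMat (Γ : Type*) (α : ℂ) (n : ℕ) (h : Γ → ℤ) (z : Γ → ℕ → ℂ) (γ : Γ) :
    Matrix (Fin n) (Fin n) ℂ :=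
  Matrix.of fun i j =>
    if hi : (i : ℕ) = 0 then
      (if (j : ℕ) = 0 then α ^ h γ else z γ (j : ℕ))
    else
      (if hj : (j : ℕ) = 0 then 0
       else Jz (n - 1) (h γ) ⟨(i : ℕ) - 1, by have := i.isLt; omega⟩
              ⟨(j : ℕ) - 1, by have := j.isLt; omega⟩)

/-- The subspace `C(i)` of `gl(n,ℂ)` of matrices whose columns of 0-based index
`< n−1−i` vanish. -/
def Csub (n i : ℕ) : Submodule ℂ (Matrix (Fin n) (Fin n) ℂ) where
  carrier := {X | ∀ a b : Fin n, (b : ℕ) < n - 1 - i → X a b = 0}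
  add_mem' := by
    intro X Y hX hY a b hb
    simp [Matrix.add_apply, hX a b hb, hY a b hb]
  zero_mem' := by intro a b hb; rfl
  smul_mem' := by
    intro c X hX a b hb
    simp [Matrix.smul_apply, hX a b hb]

lemma stdBasisMatrix_mem_Csub (n k : ℕ) (i j : Fin n) (hj : n - 1 - k ≤ (j : ℕ)) :
    Matrix.single i j (1 : ℂ) ∈ Csub n k := by
  intro a b hb
  have hjb : j ≠ b := by
    intro hjb
    subst hjb
    omega
  simp [Matrix.single, Matrix.of_apply]
  intro _ hcontra
  exact absurd hcontra hjb

/-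
Conjugation by `ϱ(γ)` acts on `C(0)`, the matrices supported in the last column, as plain left
multiplication: the last row of `ϱ(γ)` is the last standard row vector, hence so is the last row
of `ϱ(γ)⁻¹`, and then `X ϱ(γ)⁻¹ = X` for `X ∈ C(0)`. Reading off rows `2, …, n` of the last
column identifies `C(0)/ℂE₁ⁿ` with `ℂ^(n-1)`, on which `γ` acts by `J^h(γ)`. On the other side,
`(J - 1)^(n-1) = 0`, so `t ↦ J` makes `ℂ^(n-1)` a module over `ℂ[t^{±1}]/((t-1)^(n-1))`, and
`p ↦ p(J) e_{n-1}` sends `(t-1)^l` to `e_{n-1-l}`, so it is onto. It is bijective by counting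
dimensions: the quotient ring is spanned by the `n-1` classes `(t-1)^l`, `l < n-1`, since
`t⁻¹ = ∑_{i<n-1} (1-t)^i` there.
-/

lemma Nmat_pow_apply (k l : ℕ) (i j : Fin k) :
    (Nmat k ^ l) i j = if (i : ℕ) + l = j then 1 else 0 := by
  induction l generalizing j with
  | zero => simp [Matrix.one_apply, Fin.ext_iff]
  | succ l ih =>
    rw [pow_succ, Matrix.mul_apply]
    simp only [ih]
    simp only [Nmat, Matrix.of_apply, ite_mul, one_mul, zero_mul]
    rw [Fin.sum_univ_eq_sum_range (fun c => if (i : ℕ) + l = c then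
      (if c + 1 = (j : ℕ) then (1 : ℂ) else 0) else 0), Finset.sum_ite_eq]
    simp only [Finset.mem_range]
    have := j.isLt
    split_ifs <;> first | rfl | omega

lemma Nmat_pow_self (k : ℕ) : Nmat k ^ k = 0 := by
  ext i j
  rw [Nmat_pow_apply, if_neg (by omega), Matrix.zero_apply]

lemma vecMul_zpow_eq_self {ι R : Type*} [Fintype ι] [DecidableEq ι] [Semiring R]
    {U : (Matrix ι ι R)ˣ} {v : ι → R} (hU : v ᵥ* (U : Matrix ι ι R) = v) (m : ℤ) :
    v ᵥ* ((U ^ m : (Matrix ι ι R)ˣ) : Matrix ι ι R) = v := by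
  have hinv : v ᵥ* ((U⁻¹ : (Matrix ι ι R)ˣ) : Matrix ι ι R) = v := by
    conv_lhs => rw [← hU]
    rw [vecMul_vecMul, Units.mul_inv, vecMul_one]
  induction m using Int.induction_on with
  | zero => simp
  | succ m ih => rw [_root_.zpow_add_one, Units.val_mul, ← vecMul_vecMul, ih, hU]
  | pred m ih => rw [_root_.zpow_sub_one, Units.val_mul, ← vecMul_vecMul, ih, hinv]

lemma Jz_row_last (k : ℕ) (m : ℤ) :
    Jz (k + 1) m (Fin.last k) = Pi.single (Fin.last k) 1 := by
  have hJ : Pi.single (Fin.last k) 1 ᵥ* Jmat (k + 1) = Pi.single (Fin.last k) 1 := by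
    ext j
    have := j.isLt
    simp [Jmat, Nmat, Matrix.one_apply, Pi.single_apply, eq_comm, Fin.ext_iff]
    omega
  exact (single_one_vecMul _ _).symm.trans
    (vecMul_zpow_eq_self (U := (Jmat_isUnit (k + 1)).unit) hJ m)

lemma inv_row_eq_single {ι R : Type*} [Fintype ι] [DecidableEq ι] [CommRing R]
    {M : Matrix ι ι R} (hM : IsUnit M.det) {i : ι} (hi : M i = Pi.single i 1) :
    M⁻¹ i = Pi.single i 1 := by
  have hrow : Pi.single i 1 ᵥ* M = Pi.single i 1 := (single_one_vecMul i M).trans hi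
  calc M⁻¹ i = Pi.single i 1 ᵥ* M⁻¹ := (single_one_vecMul i _).symm
    _ = Pi.single i 1 := by rw [← hrow, vecMul_vecMul, mul_nonsing_inv M hM, vecMul_one, hrow]

lemma surjective_of_forall_single_mem_range {K M ι : Type*} [Semiring K] [AddCommMonoid M]
    [Module K M] [Fintype ι] [DecidableEq ι] (f : M →ₗ[K] ι → K)
    (hf : ∀ j, Pi.single j 1 ∈ LinearMap.range f) : Function.Surjective f := by
  rw [← LinearMap.range_eq_top, eq_top_iff, ← (Pi.basisFun K ι).span_eq, Submodule.span_le]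
  rintro _ ⟨j, rfl⟩
  simpa using hf j

lemma mul_mem_Csub {n i : ℕ} (A : Matrix (Fin n) (Fin n) ℂ) {X : Matrix (Fin n) (Fin n) ℂ}
    (hX : X ∈ Csub n i) : A * X ∈ Csub n i := fun a b hb => by
  simp [Matrix.mul_apply, hX _ b hb]

lemma mul_eq_self_of_mem_Csub_zero {k : ℕ} {X B : Matrix (Fin (k + 1)) (Fin (k + 1)) ℂ}
    (hX : X ∈ Csub (k + 1) 0) (hB : B (Fin.last k) = Pi.single (Fin.last k) 1) : X * B = X := by
  have hcol : ∀ a b : Fin (k + 1), b ≠ Fin.last k → X a b = 0 := fun a b hb =>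
    hX a b (by have := Fin.val_lt_last hb; omega)
  ext a b
  rw [Matrix.mul_apply, Finset.sum_eq_single (Fin.last k)
    (fun c _ hc => by rw [hcol a c hc, zero_mul]) (by simp), hB]
  by_cases hb : b = Fin.last k
  · simp [hb]
  · simp [hb, hcol a b hb]

section rhoMat

variable {Γ : Type*} (α : ℂ) (h : Γ → ℤ) (z : Γ → ℕ → ℂ) (γ : Γ)

lemma rhoMat_apply_zero_right (k : ℕ) (i : Fin (k + 1)) :
    rhoMat Γ α (k + 1) h z γ i 0 = if i = 0 then α ^ h γ else 0 := by
  cases i using Fin.cases <;> simp [rhoMat]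

lemma rhoMat_succ_succ (k : ℕ) (i j : Fin k) :
    rhoMat Γ α (k + 1) h z γ i.succ j.succ = Jz k (h γ) i j := by
  simp [rhoMat]

lemma rhoMat_row_last (m : ℕ) :
    rhoMat Γ α (m + 2) h z γ (Fin.last (m + 1)) = Pi.single (Fin.last (m + 1)) 1 := by
  funext j
  cases j using Fin.cases with
  | zero => simp [rhoMat_apply_zero_right, Fin.ext_iff]
  | succ j =>
    rw [← Fin.succ_last, rhoMat_succ_succ, Jz_row_last]
    simp [Pi.single_apply]

lemma isUnit_det_rhoMat (hα : α ≠ 0) (k : ℕ) : IsUnit (rhoMat Γ α (k + 1) h z γ).det := by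
  have hminor : (rhoMat Γ α (k + 1) h z γ).submatrix (Fin.succAbove 0) Fin.succ = Jz k (h γ) := by
    ext i j
    simp [rhoMat_succ_succ]
  rw [det_succ_column_zero, Finset.sum_eq_single 0 (fun i _ hi => by
    simp [rhoMat_apply_zero_right, hi]) (by simp), rhoMat_apply_zero_right, if_pos rfl, hminor]
  simpa using (zpow_ne_zero (h γ) hα).isUnit.mul
    ((Matrix.isUnit_iff_isUnit_det _).mp (Units.isUnit _) : IsUnit (Jz k (h γ)).det)

lemma rhoMat_mul_mul_inv_eq_mul (hα : α ≠ 0) (m : ℕ) {X : Matrix (Fin (m + 2)) (Fin (m + 2)) ℂ}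
    (hX : X ∈ Csub (m + 2) 0) :
    rhoMat Γ α (m + 2) h z γ * X * (rhoMat Γ α (m + 2) h z γ)⁻¹ = rhoMat Γ α (m + 2) h z γ * X :=
  mul_eq_self_of_mem_Csub_zero (mul_mem_Csub _ hX)
    (inv_row_eq_single (isUnit_det_rhoMat α h z γ hα _) (rhoMat_row_last α h z γ m))

lemma rhoMat_mul_apply_succ (k : ℕ) (X : Matrix (Fin (k + 1)) (Fin (k + 1)) ℂ)
    (i : Fin k) (j : Fin (k + 1)) :
    (rhoMat Γ α (k + 1) h z γ * X) i.succ j = (Jz k (h γ) *ᵥ fun l => X l.succ j) i := by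
  simp [Matrix.mul_apply, Fin.sum_univ_succ, rhoMat_apply_zero_right, rhoMat_succ_succ,
    Matrix.mulVec, dotProduct]

lemma rhoMat_mul_single_zero (k : ℕ) (j : Fin (k + 1)) :
    rhoMat Γ α (k + 1) h z γ * Matrix.single 0 j 1 = α ^ h γ • Matrix.single 0 j 1 := by
  ext a b
  by_cases hb : b = j
  · subst hb
    simp [Matrix.mul_single_apply_same, Matrix.single_apply, rhoMat_apply_zero_right, eq_comm]
  · simp [Matrix.mul_single_apply_of_ne (hbj := hb), Ne.symm hb]

end rhoMat

section TruncatedLaurent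

variable {R : Type*} [CommRing R] (k : ℕ)

local notation "𝔞" => Ideal.span {((T 1 : R[T;T⁻¹]) - 1) ^ k}

lemma mk_T_neg_one_eq_sum :
    Ideal.Quotient.mk 𝔞 (T (-1)) = ∑ i ∈ Finset.range k, (-Ideal.Quotient.mk 𝔞 (T 1 - 1)) ^ i := by
  set u := Ideal.Quotient.mk 𝔞 (T 1 - 1)
  have hu : u ^ k = 0 := by
    rw [← map_pow, Ideal.Quotient.eq_zero_iff_mem]
    exact Ideal.mem_span_singleton_self _
  have hT : Ideal.Quotient.mk 𝔞 (T 1) = 1 - -u := by simp [u]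
  refine left_inv_eq_right_inv (a := Ideal.Quotient.mk 𝔞 (T 1)) ?_ ?_
  · rw [← map_mul, ← T_add, neg_add_cancel, T_zero, map_one]
  · rw [hT, mul_neg_geom_sum, neg_pow u k, hu, mul_zero, sub_zero]

lemma adjoin_mk_T_sub_one_eq_top : Algebra.adjoin R {Ideal.Quotient.mk 𝔞 (T 1 - 1)} = ⊤ := by
  set S := Algebra.adjoin R {Ideal.Quotient.mk 𝔞 (T 1 - 1)}
  have hu : Ideal.Quotient.mk 𝔞 (T 1 - 1) ∈ S := Algebra.self_mem_adjoin_singleton R _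
  have hT : Ideal.Quotient.mk 𝔞 (T 1) ∈ S := by
    simpa using S.add_mem hu S.one_mem
  have hTinv : Ideal.Quotient.mk 𝔞 (T (-1)) ∈ S := by
    rw [mk_T_neg_one_eq_sum]
    exact S.sum_mem fun i _ => S.pow_mem (S.neg_mem hu) i
  have hTm : ∀ m : ℤ, Ideal.Quotient.mk 𝔞 (T m) ∈ S := by
    intro m
    induction m using Int.induction_on with
    | zero => simp [S.one_mem]
    | succ m ih => rw [T_add, map_mul]; exact S.mul_mem ih hT
    | pred m ih => rw [T_sub, map_mul]; exact S.mul_mem ih hTinv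
  rw [eq_top_iff]
  rintro x -
  obtain ⟨p, rfl⟩ := Ideal.Quotient.mk_surjective x
  induction p using LaurentPolynomial.induction_on' with
  | add p q hp hq => simpa using S.add_mem hp hq
  | C_mul_T m a =>
    rw [map_mul, C_eq_algebraMap, Ideal.Quotient.mk_algebraMap]
    exact S.mul_mem (S.algebraMap_mem a) (hTm m)

lemma span_mk_T_sub_one_pow_eq_top :
    Submodule.span R (Set.range fun l : Fin k => Ideal.Quotient.mk 𝔞 ((T 1 - 1) ^ (l : ℕ)))
      = ⊤ := by
  set u := Ideal.Quotient.mk 𝔞 (T 1 - 1)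
  have hpow : ∀ i : ℕ, u ^ i ∈ Submodule.span R (Set.range fun l : Fin k =>
      Ideal.Quotient.mk 𝔞 ((T 1 - 1) ^ (l : ℕ))) := by
    intro i
    by_cases hi : i < k
    · exact Submodule.subset_span ⟨⟨i, hi⟩, by simp [u]⟩
    · rw [← map_pow, (Ideal.Quotient.eq_zero_iff_mem).mpr (Ideal.mem_span_singleton.mpr
        ⟨_, (pow_mul_pow_sub _ (not_lt.mp hi)).symm⟩)]
      exact Submodule.zero_mem _
  rw [eq_top_iff]
  rintro x -
  have hx : x ∈ Algebra.adjoin R {u} := by rw [adjoin_mk_T_sub_one_eq_top]; trivial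
  rw [Algebra.adjoin_singleton_eq_range_aeval] at hx
  obtain ⟨p, rfl⟩ := hx
  rw [AlgHom.toRingHom_eq_coe, RingHom.coe_coe, Polynomial.aeval_eq_sum_range]
  exact Submodule.sum_mem _ fun i _ => Submodule.smul_mem _ _ (hpow i)

end TruncatedLaurent

def jordanAlgHom (k : ℕ) : ℂ[T;T⁻¹] →ₐ[ℂ] Matrix (Fin k) (Fin k) ℂ :=
  AddMonoidAlgebra.lift ℂ _ ℤ ((Units.coeHom _).comp (zpowersHom _ (Jmat_isUnit k).unit))

lemma jordanAlgHom_T (k : ℕ) (m : ℤ) : jordanAlgHom k (T m) = Jz k m := by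
  rw [T, jordanAlgHom, AddMonoidAlgebra.lift_single]
  simp [Jz]

lemma jordanAlgHom_T_sub_one_pow (k l : ℕ) : jordanAlgHom k ((T 1 - 1) ^ l) = Nmat k ^ l := by
  rw [map_pow, map_sub, map_one, jordanAlgHom_T, Jz, zpow_one, IsUnit.unit_spec, Jmat,
    add_sub_cancel_left]

def jordanQuotAlgHom (k : ℕ) :
    (ℂ[T;T⁻¹] ⧸ Ideal.span {((T 1 : ℂ[T;T⁻¹]) - 1) ^ k}) →ₐ[ℂ] Matrix (Fin k) (Fin k) ℂ :=
  Ideal.Quotient.liftₐ _ (jordanAlgHom k) fun a ha => by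
    obtain ⟨c, rfl⟩ := Ideal.mem_span_singleton'.mp ha
    rw [map_mul, jordanAlgHom_T_sub_one_pow, Nmat_pow_self, mul_zero]

def jordanEval (m : ℕ) :
    (ℂ[T;T⁻¹] ⧸ Ideal.span {((T 1 : ℂ[T;T⁻¹]) - 1) ^ (m + 1)}) →ₗ[ℂ] Fin (m + 1) → ℂ where
  toFun x := jordanQuotAlgHom (m + 1) x *ᵥ Pi.single (Fin.last m) 1
  map_add' x y := by rw [map_add, add_mulVec]
  map_smul' c x := by rw [map_smul, smul_mulVec, RingHom.id_apply]

lemma jordanEval_mk (m : ℕ) (p : ℂ[T;T⁻¹]) :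
    jordanEval m (Ideal.Quotient.mk _ p) = jordanAlgHom (m + 1) p *ᵥ Pi.single (Fin.last m) 1 :=
  rfl

lemma jordanEval_mk_T_sub_one_pow (m l : ℕ) (hl : l ≤ m) :
    jordanEval m (Ideal.Quotient.mk _ ((T 1 - 1) ^ l)) = Pi.single ⟨m - l, by omega⟩ 1 := by
  ext i
  rw [jordanEval_mk, jordanAlgHom_T_sub_one_pow, mulVec_single_one, col_apply, Nmat_pow_apply]
  simp only [Pi.single_apply, Fin.ext_iff, Fin.val_last]
  congr 1
  exact propext (by omega)

lemma jordanEval_mk_T_mul (m : ℕ) (a : ℤ) (x) :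
    jordanEval m (Ideal.Quotient.mk _ (T a) * x) = Jz (m + 1) a *ᵥ jordanEval m x := by
  obtain ⟨p, rfl⟩ := Ideal.Quotient.mk_surjective x
  rw [← map_mul, jordanEval_mk, jordanEval_mk, map_mul, jordanAlgHom_T, mulVec_mulVec]

lemma jordanEval_bijective (m : ℕ) : Function.Bijective (jordanEval m) := by
  have hsurj : Function.Surjective (Fintype.linearCombination ℂ fun l : Fin (m + 1) =>
      Ideal.Quotient.mk (Ideal.span {((T 1 : ℂ[T;T⁻¹]) - 1) ^ (m + 1)}) ((T 1 - 1) ^ (l : ℕ))) := by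
    rw [← LinearMap.range_eq_top, Fintype.range_linearCombination, span_mk_T_sub_one_pow_eq_top]
  have := Module.Finite.of_surjective _ hsurj
  refine OrzechProperty.bijective_of_surjective_of_finrank_le _ ?_
    (LinearMap.finrank_le_finrank_of_surjective hsurj)
  refine surjective_of_forall_single_mem_range _ fun j =>
    ⟨Ideal.Quotient.mk _ ((T 1 - 1) ^ (m - (j : ℕ))), ?_⟩
  rw [jordanEval_mk_T_sub_one_pow m (m - j) (by omega)]
  congr
  omega

def cornerLine (m : ℕ) : Submodule ℂ (Csub (m + 2) 0) :=
  Submodule.span ℂ {⟨Matrix.single 0 (Fin.last (m + 1)) 1,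
    stdBasisMatrix_mem_Csub _ _ _ _ le_rfl⟩}

def lastColumnTail (m : ℕ) : Csub (m + 2) 0 →ₗ[ℂ] Fin (m + 1) → ℂ where
  toFun X i := (X : Matrix (Fin (m + 2)) (Fin (m + 2)) ℂ) i.succ (Fin.last (m + 1))
  map_add' _ _ := rfl
  map_smul' _ _ := rfl

@[simp]
lemma lastColumnTail_apply (m : ℕ) (X : Csub (m + 2) 0) (i : Fin (m + 1)) :
    lastColumnTail m X i = (X : Matrix (Fin (m + 2)) (Fin (m + 2)) ℂ) i.succ (Fin.last (m + 1)) :=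
  rfl

lemma lastColumnTail_single (m : ℕ) (j : Fin (m + 1)) {a : Fin (m + 2)} (ha : a = j.succ)
    (hmem : Matrix.single a (Fin.last (m + 1)) 1 ∈ Csub (m + 2) 0) :
    lastColumnTail m ⟨_, hmem⟩ = Pi.single j 1 := by
  subst ha
  ext i
  simp [Matrix.single_apply, Pi.single_apply, eq_comm]

lemma ker_lastColumnTail (m : ℕ) : LinearMap.ker (lastColumnTail m) = cornerLine m := by
  ext X
  rw [LinearMap.mem_ker, cornerLine, Submodule.mem_span_singleton]
  constructor
  · intro hX
    refine ⟨(X : Matrix (Fin (m + 2)) (Fin (m + 2)) ℂ) 0 (Fin.last (m + 1)), Subtype.ext ?_⟩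
    ext a b
    by_cases hb : b = Fin.last (m + 1)
    · subst hb
      cases a using Fin.cases with
      | zero => simp
      | succ i =>
        simpa [Matrix.single_apply, (Fin.succ_ne_zero i).symm] using (congrFun hX i).symm
    · simp [Ne.symm hb, X.2 a b (by have := Fin.val_lt_last hb; omega)]
  · rintro ⟨c, rfl⟩
    ext i
    simp [(Fin.succ_ne_zero i).symm]

def lastColumnQuotEquiv (m : ℕ) : (Csub (m + 2) 0 ⧸ cornerLine m) ≃ₗ[ℂ] Fin (m + 1) → ℂ :=
  (Submodule.quotEquivOfEq _ _ (ker_lastColumnTail m).symm).trans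
    (LinearMap.quotKerEquivOfSurjective _ (surjective_of_forall_single_mem_range _ fun j =>
      ⟨_, lastColumnTail_single m j rfl (stdBasisMatrix_mem_Csub _ _ _ _ le_rfl)⟩))

lemma lastColumnTail_rhoMat_conj {Γ : Type*} (α : ℂ) (hα : α ≠ 0) (h : Γ → ℤ) (z : Γ → ℕ → ℂ)
    (γ : Γ) (m : ℕ) (X : Csub (m + 2) 0)
    (hc : rhoMat Γ α (m + 2) h z γ * X * (rhoMat Γ α (m + 2) h z γ)⁻¹ ∈ Csub (m + 2) 0) :
    lastColumnTail m ⟨_, hc⟩ = Jz (m + 1) (h γ) *ᵥ lastColumnTail m X := by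
  ext i
  simp only [lastColumnTail_apply, rhoMat_mul_mul_inv_eq_mul α h z γ hα m X.2]
  exact rhoMat_mul_apply_succ α h z γ (m + 1) X i _

def jordanQuotEquiv (m : ℕ) :
    (ℂ[T;T⁻¹] ⧸ Ideal.span {((T 1 : ℂ[T;T⁻¹]) - 1) ^ (m + 1)}) ≃ₗ[ℂ]
      (Csub (m + 2) 0 ⧸ cornerLine m) :=
  (LinearEquiv.ofBijective _ (jordanEval_bijective m)).trans (lastColumnQuotEquiv m).symm

lemma lastColumnQuotEquiv_jordanQuotEquiv (m : ℕ) (x) :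
    lastColumnQuotEquiv m (jordanQuotEquiv m x) = jordanEval m x :=
  (lastColumnQuotEquiv m).apply_symm_apply _

/-- C(0) and the line ℂ·E₁ⁿ are invariant under the adjoint action
`γ·X = ϱ(γ) X ϱ(γ)⁻¹` (indeed `γ·E₁ⁿ = α^{h(γ)} E₁ⁿ`), and there is a ℂ-linear
isomorphism `φ : ℂ[t^{±1}]/((t−1)^{n−1}) ≃ C(0)/(ℂ·E₁ⁿ)` sending the class of
`(t−1)^l` to the class of `E_{n−l}ⁿ` for `0 ≤ l ≤ n−2` and intertwining
multiplication by `t^{h(γ)}` with the induced adjoint action of γ. -/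
theorem stmt10 (Γ : Type*) (h : Γ → ℤ)
    (α : ℂ) (hα : α ≠ 0) (n : ℕ) (hn : 2 ≤ n) (z : Γ → ℕ → ℂ) :
    (∀ γ : Γ, ∀ X ∈ Csub n 0,
        rhoMat Γ α n h z γ * X * (rhoMat Γ α n h z γ)⁻¹ ∈ Csub n 0)
    ∧ (∀ γ : Γ,
        rhoMat Γ α n h z γ
            * Matrix.single (⟨0, by omega⟩ : Fin n) (⟨n - 1, by omega⟩ : Fin n)
                (1 : ℂ)
            * (rhoMat Γ α n h z γ)⁻¹
          = α ^ h γ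
              • Matrix.single (⟨0, by omega⟩ : Fin n) (⟨n - 1, by omega⟩ : Fin n)
                  (1 : ℂ))
    ∧ ∃ φ : (LaurentPolynomial ℂ ⧸
          Ideal.span {((LaurentPolynomial.T 1 : LaurentPolynomial ℂ) - 1) ^ (n - 1)})
        ≃ₗ[ℂ]
        (Csub n 0 ⧸ Submodule.span ℂ
          {(⟨Matrix.single (⟨0, by omega⟩ : Fin n) (⟨n - 1, by omega⟩ : Fin n)
              (1 : ℂ),
            stdBasisMatrix_mem_Csub n 0 _ _ (le_refl _)⟩ : Csub n 0)}),
      (∀ l : ℕ, l ≤ n - 2 →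
        φ (Ideal.Quotient.mk _
            (((LaurentPolynomial.T 1 : LaurentPolynomial ℂ) - 1) ^ l))
          = Submodule.Quotient.mk
              ⟨Matrix.single (⟨n - 1 - l, by omega⟩ : Fin n)
                  (⟨n - 1, by omega⟩ : Fin n) (1 : ℂ),
                stdBasisMatrix_mem_Csub n 0 _ _ (le_refl _)⟩)
      ∧ (∀ (γ : Γ) p (X : Csub n 0),
          φ p = Submodule.Quotient.mk X →
          ∀ hc : rhoMat Γ α n h z γ * (X : Matrix (Fin n) (Fin n) ℂ)
              * (rhoMat Γ α n h z γ)⁻¹ ∈ Csub n 0,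
            φ (Ideal.Quotient.mk _ (LaurentPolynomial.T (h γ)) * p)
              = Submodule.Quotient.mk ⟨_, hc⟩) := by
  obtain ⟨m, rfl⟩ : ∃ m, n = m + 2 := ⟨n - 2, by omega⟩
  refine ⟨fun γ X hX => ?_, fun γ => ?_, jordanQuotEquiv m, fun l hl => ?_,
    fun γ p X hX hc => ?_⟩
  · rw [rhoMat_mul_mul_inv_eq_mul α h z γ hα m hX]
    exact mul_mem_Csub _ hX
  · rw [rhoMat_mul_mul_inv_eq_mul α h z γ hα m (stdBasisMatrix_mem_Csub _ _ _ _ le_rfl)]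
    exact rhoMat_mul_single_zero α h z γ (m + 1) _
  · apply (lastColumnQuotEquiv m).injective
    refine (lastColumnQuotEquiv_jordanQuotEquiv m _).trans ?_
    exact (jordanEval_mk_T_sub_one_pow m l (by omega)).trans
      (lastColumnTail_single m _ (Fin.ext (by simp; omega))
        (stdBasisMatrix_mem_Csub _ _ _ _ le_rfl)).symm
  · have hpX : jordanEval m p = lastColumnTail m X :=
      (lastColumnQuotEquiv_jordanQuotEquiv m p).symm.trans (congrArg (lastColumnQuotEquiv m) hX)
    apply (lastColumnQuotEquiv m).injective
    refine (lastColumnQuotEquiv_jordanQuotEquiv m _).trans ?_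
    refine (jordanEval_mk_T_mul m (h γ) p).trans ?_
    show _ = lastColumnTail m ⟨_, hc⟩
    rw [lastColumnTail_rhoMat_conj α hα h z γ m X hc, hpX]

end
end

section
/- Let n ≥ 2, let λ be a nonzero complex number with α := λ^n ≠ 1, and let A : ℂ → SL(n,ℂ) be a map, analytic in a neighborhood of 0, with A(0) = λ^{−1}·diag(α, J_{n−1}) (the block-diagonal matrix with (1,1)-entry α and lower-right block J_{n−1}, scaled by λ^{−1}). Then there exist ε > 0 and an analytic map C : {t ∈ ℂ : |t| < ε} → SL(n,ℂ) with C(0) = I_n such that for all |t| < ε the matrix C(t) A(t) C(t)^{−1} satisfies (C(t) A(t) C(t)^{−1})_{i,1} = 0 and (C(t) A(t) C(t)^{−1})_{1,j} = 0 for all 2 ≤ i, j ≤ n. -/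
open Matrix

noncomputable section

/-!
Write `A(t) = [[a, b], [c, D]]` in blocks of sizes `1` and `n - 1`. A shear `S = [[1, y], [x, 1]]`
conjugates `A(t)` to a block-diagonal matrix `B`, i.e. `A S = S B`, as soon as the column `x` and the
row `y` solve the Riccati equations `c + D x = x (a + b x)` and `a y + b = y (c y + D)`. Since `b` and
`c` vanish at `t = 0`, there these equations are linear, `(D₀ - a₀) x = 0` and `y (a₀ - D₀) = 0`, and
`D₀ - a₀ = λ⁻¹ (J - α)` is invertible because `α ≠ 1`. So the analytic implicit function theorem
yields analytic solutions `x(t), y(t)` vanishing at `0`, and `C = diag(det S, 1, …, 1) S⁻¹` has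
determinant one.
-/

open Matrix Filter Topology
open scoped ContDiff

section AnalyticMatrix

variable {𝕜 E ι : Type*} [NontriviallyNormedField 𝕜] [NormedAddCommGroup E] [NormedSpace 𝕜 E]
  [Fintype ι] [DecidableEq ι] {M : E → Matrix ι ι 𝕜} {z : E}

theorem analyticAt_matrix_det (hM : ∀ i j, AnalyticAt 𝕜 (fun s => M s i j) z) :
    AnalyticAt 𝕜 (fun s => (M s).det) z := by
  simp_rw [det_apply']
  fun_prop

theorem analyticAt_matrix_inv_apply (hM : ∀ i j, AnalyticAt 𝕜 (fun s => M s i j) z)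
    (hdet : (M z).det ≠ 0) (i j : ι) : AnalyticAt 𝕜 (fun s => (M s)⁻¹ i j) z := by
  simp_rw [inv_def, Matrix.smul_apply, adjugate_apply, Ring.inverse_eq_inv', smul_eq_mul]
  refine ((analyticAt_matrix_det hM).inv hdet).mul (analyticAt_matrix_det fun k l => ?_)
  simp_rw [updateRow_apply]
  split_ifs <;> fun_prop

end AnalyticMatrix

theorem ContinuousLinearMap.isInvertible_of_injective {𝕜 V : Type*} [NontriviallyNormedField 𝕜]
    [CompleteSpace 𝕜] [NormedAddCommGroup V] [NormedSpace 𝕜 V] [FiniteDimensional 𝕜 V]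
    {L : V →L[𝕜] V} (hL : Function.Injective L) : L.IsInvertible :=
  ⟨(LinearEquiv.ofInjectiveEndo L.toLinearMap hL).toContinuousLinearEquiv, rfl⟩

theorem exists_analyticAt_implicit {𝕜 E V : Type*} [RCLike 𝕜] [NormedAddCommGroup E]
    [NormedSpace 𝕜 E] [CompleteSpace E] [NormedAddCommGroup V] [NormedSpace 𝕜 V]
    [FiniteDimensional 𝕜 V] {F : E × V → V} (hF : AnalyticAt 𝕜 F 0) (hF0 : F 0 = 0)
    {L : V →L[𝕜] V} (hL : Function.Injective L) (hslice : HasFDerivAt (fun v => F (0, v)) L 0) :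
    ∃ ψ : E → V, AnalyticAt 𝕜 ψ 0 ∧ ψ 0 = 0 ∧ ∀ᶠ t in 𝓝 0, F (t, ψ t) = 0 := by
  have := FiniteDimensional.complete 𝕜 V
  have hpartial : fderiv 𝕜 F 0 ∘L .inr 𝕜 E V = L :=
    (hslice.unique (hF.differentiableAt.hasFDerivAt.comp (0 : V)
      (hasFDerivAt_prodMk_right (0 : E) 0))).symm
  have hinv : (fderiv 𝕜 F 0 ∘L .inr 𝕜 E V).IsInvertible :=
    hpartial ▸ L.isInvertible_of_injective hL
  have hcd : ContDiffAt 𝕜 ω F 0 := hF.contDiffAt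
  refine ⟨hcd.implicitFunction (by simp) hinv,
    (hcd.contDiffAt_implicitFunction _ hinv).analyticAt, hcd.implicitFunction_apply_self _ hinv, ?_⟩
  simpa [hF0] using hcd.eventually_apply_implicitFunction (by simp) hinv

section Conjugation

variable {K n : Type*} [Field K] [Fintype n] [DecidableEq n]

theorem diagonal_mul_inv_conj_apply {M S B : Matrix n n K} {u : n → K} (hS : IsUnit S.det)
    (hu : ∀ k, u k ≠ 0) (hMS : M * S = S * B) (i j : n) :
    (diagonal u * S⁻¹ * M * (diagonal u * S⁻¹)⁻¹) i j = u i * B i j * (u j)⁻¹ := by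
  have hB : S⁻¹ * M * S = B := by
    rw [Matrix.mul_assoc, hMS, ← Matrix.mul_assoc, nonsing_inv_mul _ hS, Matrix.one_mul]
  have hdiag : (diagonal u)⁻¹ = diagonal u⁻¹ :=
    inv_eq_right_inv (by simp [diagonal_mul_diagonal, mul_inv_cancel₀ (hu _)])
  rw [Matrix.mul_inv_rev, nonsing_inv_nonsing_inv _ hS, hdiag,
    show diagonal u * S⁻¹ * M * (S * diagonal u⁻¹) = diagonal u * (S⁻¹ * M * S) * diagonal u⁻¹ by
      simp only [Matrix.mul_assoc], hB, mul_diagonal, diagonal_mul, Pi.inv_apply]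

end Conjugation

section Riccati

variable {K ι : Type*} [Field K] [Fintype ι] [DecidableEq ι]

def riccati (M : Matrix (Fin 1 ⊕ ι) (Fin 1 ⊕ ι) K) (x y : ι → K) : (ι → K) × (ι → K) :=
  let a := M (.inl 0) (.inl 0)
  let b := fun j => M (.inl 0) (.inr j)
  let c := fun i => M (.inr i) (.inl 0)
  (c + M.toBlocks₂₂ *ᵥ x - (a + b ⬝ᵥ x) • x, a • y + b - y ᵥ* (vecMulVec c y + M.toBlocks₂₂))

def shear (x y : ι → K) : Matrix (Fin 1 ⊕ ι) (Fin 1 ⊕ ι) K :=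
  fromBlocks 1 (replicateRow (Fin 1) y) (replicateCol (Fin 1) x) 1

def unimodularInv (S : Matrix (Fin 1 ⊕ ι) (Fin 1 ⊕ ι) K) :
    Matrix (Fin 1 ⊕ ι) (Fin 1 ⊕ ι) K :=
  diagonal (Sum.elim (fun _ => S.det) 1) * S⁻¹

omit [Fintype ι] in
theorem shear_zero : shear (0 : ι → K) 0 = 1 := by
  simp [shear]

theorem unimodularInv_one : unimodularInv (1 : Matrix (Fin 1 ⊕ ι) (Fin 1 ⊕ ι) K) = 1 := by
  ext (i | i) (j | j) <;> simp [unimodularInv, one_apply]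

theorem det_unimodularInv {S : Matrix (Fin 1 ⊕ ι) (Fin 1 ⊕ ι) K} (hS : S.det ≠ 0) :
    (unimodularInv S).det = 1 := by
  simp [unimodularInv, det_diagonal, Fintype.prod_sum_type, hS]

theorem riccati_fromBlocks (a : K) (D : Matrix ι ι K) (x y : ι → K) :
    riccati (fromBlocks (of fun _ _ => a) 0 0 D) x y = ((D - a • 1) *ᵥ x, y ᵥ* (a • 1 - D)) := by
  simp [riccati, sub_mulVec, vecMul_sub, smul_mulVec, vecMul_smul, ← Pi.zero_def]

theorem mul_shear_eq_shear_mul {M : Matrix (Fin 1 ⊕ ι) (Fin 1 ⊕ ι) K} {x y : ι → K}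
    (h : riccati M x y = 0) :
    M * shear x y = shear x y *
      fromBlocks (of fun _ _ => M (.inl 0) (.inl 0) + (fun j => M (.inl 0) (.inr j)) ⬝ᵥ x) 0 0
        (vecMulVec (fun i => M (.inr i) (.inl 0)) y + M.toBlocks₂₂) := by
  have h₁ i := congrFun (congrArg Prod.fst h) i
  have h₂ j := congrFun (congrArg Prod.snd h) j
  simp only [riccati, Pi.add_apply, Pi.sub_apply, Pi.smul_apply, smul_eq_mul, mulVec, vecMul,
    dotProduct, toBlocks₂₂, of_apply, vecMulVec, Matrix.add_apply, Prod.fst_zero, Prod.snd_zero,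
    Pi.zero_apply] at h₁ h₂
  ext (i | i) (j | j)
  · simp [Matrix.mul_apply, Fintype.sum_sum_type, shear, Fin.fin_one_eq_zero i,
      Fin.fin_one_eq_zero j, dotProduct]
  · simp [Matrix.mul_apply, Fintype.sum_sum_type, shear, Fin.fin_one_eq_zero i, vecMulVec,
      one_apply, toBlocks₂₂]
    linear_combination h₂ j
  · simp [Matrix.mul_apply, Fintype.sum_sum_type, shear, Fin.fin_one_eq_zero j, dotProduct]
    linear_combination h₁ i
  · simp [Matrix.mul_apply, Fintype.sum_sum_type, shear, vecMulVec, one_apply, toBlocks₂₂]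

theorem unimodularInv_shear_conj_apply_eq_zero {M : Matrix (Fin 1 ⊕ ι) (Fin 1 ⊕ ι) K}
    {x y : ι → K} (h : riccati M x y = 0) (hS : (shear x y).det ≠ 0) :
    (∀ i, (unimodularInv (shear x y) * M * (unimodularInv (shear x y))⁻¹) (.inr i) (.inl 0) = 0) ∧
      ∀ j, (unimodularInv (shear x y) * M * (unimodularInv (shear x y))⁻¹) (.inl 0) (.inr j) = 0 := by
  have hu : ∀ k, Sum.elim (fun _ : Fin 1 => (shear x y).det) (1 : ι → K) k ≠ 0 := by
    rintro (k | k) <;> simp [hS]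
  constructor <;> intro k <;>
    simp [unimodularInv, diagonal_mul_inv_conj_apply hS.isUnit hu (mul_shear_eq_shear_mul h)]

end Riccati

section AnalyticRiccati

variable {E ι : Type*} [NormedAddCommGroup E] [NormedSpace ℂ E] [Fintype ι] [DecidableEq ι]
  {z : E}

omit [DecidableEq ι] in
theorem analyticAt_riccati {M : E → Matrix (Fin 1 ⊕ ι) (Fin 1 ⊕ ι) ℂ} {x y : E → ι → ℂ}
    (hM : ∀ i j, AnalyticAt ℂ (fun s => M s i j) z) (hx : ∀ i, AnalyticAt ℂ (fun s => x s i) z)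
    (hy : ∀ i, AnalyticAt ℂ (fun s => y s i) z) :
    AnalyticAt ℂ (fun s => riccati (M s) (x s) (y s)) z := by
  refine .prod (analyticAt_pi_iff.2 fun i => ?_) (analyticAt_pi_iff.2 fun j => ?_) <;>
  · simp only [Matrix.add_apply, Pi.add_apply, Pi.sub_apply, Pi.smul_apply, smul_eq_mul,
      mulVec, vecMul, dotProduct, toBlocks₂₂, of_apply, vecMulVec]
    fun_prop

omit [Fintype ι] in
theorem analyticAt_shear_apply {x y : E → ι → ℂ} (hx : ∀ i, AnalyticAt ℂ (fun s => x s i) z)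
    (hy : ∀ i, AnalyticAt ℂ (fun s => y s i) z) (i j : Fin 1 ⊕ ι) :
    AnalyticAt ℂ (fun s => shear (x s) (y s) i j) z := by
  rcases i with i | i <;> rcases j with j | j <;> simp [shear, hx, hy, analyticAt_const]

theorem analyticAt_unimodularInv_apply {S : E → Matrix (Fin 1 ⊕ ι) (Fin 1 ⊕ ι) ℂ}
    (hS : ∀ i j, AnalyticAt ℂ (fun s => S s i j) z) (hdet : (S z).det ≠ 0) (i j : Fin 1 ⊕ ι) :
    AnalyticAt ℂ (fun s => unimodularInv (S s) i j) z := by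
  simp only [unimodularInv, diagonal_mul]
  refine .mul ?_ (analyticAt_matrix_inv_apply hS hdet i j)
  rcases i with i | i
  · exact analyticAt_matrix_det hS
  · exact analyticAt_const

end AnalyticRiccati

section Diagonalization

variable {ι : Type*} [Fintype ι] [DecidableEq ι] {A : ℂ → Matrix (Fin 1 ⊕ ι) (Fin 1 ⊕ ι) ℂ}
  {a₀ : ℂ} {D₀ : Matrix ι ι ℂ}

theorem exists_analyticAt_riccati_eq_zero (hA : ∀ i j, AnalyticAt ℂ (fun t => A t i j) 0)
    (hA0 : A 0 = fromBlocks (of fun _ _ => a₀) 0 0 D₀) (hD₀ : (D₀ - a₀ • 1).det ≠ 0) :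
    ∃ ψ : ℂ → (ι → ℂ) × (ι → ℂ), AnalyticAt ℂ ψ 0 ∧ ψ 0 = 0 ∧
      ∀ᶠ t in 𝓝 0, riccati (A t) (ψ t).1 (ψ t).2 = 0 := by
  let F : ℂ × (ι → ℂ) × (ι → ℂ) → (ι → ℂ) × (ι → ℂ) := fun p => riccati (A p.1) p.2.1 p.2.2
  let L : ((ι → ℂ) × (ι → ℂ)) →L[ℂ] (ι → ℂ) × (ι → ℂ) :=
    LinearMap.toContinuousLinearMap
      ((D₀ - a₀ • 1).mulVecLin.prodMap (a₀ • 1 - D₀).vecMulLinear)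
  have hM : IsUnit (D₀ - a₀ • 1) := (isUnit_iff_isUnit_det _).2 hD₀.isUnit
  have hF : AnalyticAt ℂ F 0 :=
    analyticAt_riccati (fun i j => (hA i j).comp_of_eq analyticAt_fst rfl)
      (analyticAt_pi_iff.1 (analyticAt_fst.comp analyticAt_snd))
      (analyticAt_pi_iff.1 (analyticAt_snd.comp analyticAt_snd))
  have hslice : (fun v => F (0, v)) = L := by
    funext v
    show riccati (A 0) v.1 v.2 = L v
    rw [hA0, riccati_fromBlocks]
    rfl
  have hL : Function.Injective L :=
    (mulVec_injective_iff_isUnit.2 hM).prodMap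
      (vecMul_injective_iff_isUnit.2 (neg_sub D₀ (a₀ • 1) ▸ hM.neg))
  exact exists_analyticAt_implicit hF ((congrFun hslice 0).trans (map_zero L)) hL
    (hslice ▸ L.hasFDerivAt)

theorem exists_analytic_unimodular_blockDiagonalizing
    (hA : ∀ i j, AnalyticAt ℂ (fun t => A t i j) 0)
    (hA0 : A 0 = fromBlocks (of fun _ _ => a₀) 0 0 D₀) (hD₀ : (D₀ - a₀ • 1).det ≠ 0) :
    ∃ ε > (0 : ℝ), ∃ C : ℂ → Matrix (Fin 1 ⊕ ι) (Fin 1 ⊕ ι) ℂ,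
      C 0 = 1
      ∧ (∀ i j, ∀ t ∈ Metric.ball (0 : ℂ) ε, AnalyticAt ℂ (fun s => C s i j) t)
      ∧ (∀ t ∈ Metric.ball (0 : ℂ) ε, (C t).det = 1)
      ∧ (∀ t ∈ Metric.ball (0 : ℂ) ε,
          (∀ i : ι, (C t * A t * (C t)⁻¹) (Sum.inr i) (Sum.inl 0) = 0)
          ∧ (∀ j : ι, (C t * A t * (C t)⁻¹) (Sum.inl 0) (Sum.inr j) = 0)) := by
  obtain ⟨ψ, hψ, hψ0, hψF⟩ := exists_analyticAt_riccati_eq_zero hA hA0 hD₀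
  have hS : ∀ t, AnalyticAt ℂ ψ t → ∀ i j, AnalyticAt ℂ (fun s => shear (ψ s).1 (ψ s).2 i j) t :=
    fun t h => analyticAt_shear_apply (analyticAt_pi_iff.1 (analyticAt_fst.comp h))
      (analyticAt_pi_iff.1 (analyticAt_snd.comp h))
  have hdet : ∀ᶠ t in 𝓝 0, (shear (ψ t).1 (ψ t).2).det ≠ 0 :=
    (analyticAt_matrix_det (hS 0 hψ)).continuousAt.eventually_ne (by simp [hψ0, shear_zero])
  obtain ⟨ε, hε, hball⟩ :=
    Metric.eventually_nhds_iff_ball.1 (hψ.eventually_analyticAt.and (hψF.and hdet))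
  refine ⟨ε, hε, fun t => unimodularInv (shear (ψ t).1 (ψ t).2),
    by simp [hψ0, shear_zero, unimodularInv_one],
    fun i j t ht => analyticAt_unimodularInv_apply (hS t (hball t ht).1) (hball t ht).2.2 i j,
    fun t ht => det_unimodularInv (hball t ht).2.2,
    fun t ht => unimodularInv_shear_conj_apply_eq_zero (hball t ht).2.1 (hball t ht).2.2⟩

end Diagonalization

theorem det_smul_Jmat_sub_smul_one (c d : ℂ) (k : ℕ) : (c • Jmat k - d • 1).det = (c - d) ^ k := by
  have htri : (c • Jmat k - d • 1).IsUpperTriangular := fun i j hij => by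
    simp [Jmat_blockTriangular k hij, one_apply_ne (ne_of_gt (show j < i from hij))]
  rw [det_of_isUpperTriangular htri]
  simp [Jmat, Nmat]

theorem stmt15_general (n : ℕ) (lam : ℂ) (hlam : lam ≠ 0) (halpha : lam ^ n ≠ 1)
    (A : ℂ → Matrix (Fin 1 ⊕ Fin (n - 1)) (Fin 1 ⊕ Fin (n - 1)) ℂ)
    (hAanalytic : ∀ i j, AnalyticAt ℂ (fun t => A t i j) 0)
    (hA0 : A 0 = lam⁻¹ • Matrix.fromBlocks (Matrix.of fun _ _ => lam ^ n) 0 0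
      (Jmat (n - 1))) :
    ∃ ε > (0 : ℝ),
      ∃ C : ℂ → Matrix (Fin 1 ⊕ Fin (n - 1)) (Fin 1 ⊕ Fin (n - 1)) ℂ,
        C 0 = 1
        ∧ (∀ i j, ∀ t ∈ Metric.ball (0 : ℂ) ε, AnalyticAt ℂ (fun s => C s i j) t)
        ∧ (∀ t ∈ Metric.ball (0 : ℂ) ε, (C t).det = 1)
        ∧ (∀ t ∈ Metric.ball (0 : ℂ) ε,
            (∀ i : Fin (n - 1), (C t * A t * (C t)⁻¹) (Sum.inr i) (Sum.inl 0) = 0)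
            ∧ (∀ j : Fin (n - 1), (C t * A t * (C t)⁻¹) (Sum.inl 0) (Sum.inr j) = 0)) := by
  have hA0' : A 0 = fromBlocks (of fun _ _ => lam⁻¹ * lam ^ n) 0 0 (lam⁻¹ • Jmat (n - 1)) := by
    rw [hA0, fromBlocks_smul, smul_zero, smul_zero, smul_of]
    rfl
  refine exists_analytic_unimodular_blockDiagonalizing hAanalytic hA0' ?_
  rw [det_smul_Jmat_sub_smul_one, ← mul_one_sub]
  exact pow_ne_zero _ (mul_ne_zero (inv_ne_zero hlam) (sub_ne_zero.2 halpha.symm))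

/-- If `A : ℂ → SL(n,ℂ)` is analytic near 0 with
`A(0) = λ^{−1}·diag(α, J_{n−1})`, `α = λ^n ≠ 1`, then there is an analytic curve
`C(t)` in SL(n,ℂ) with `C(0) = I` such that `C(t) A(t) C(t)^{−1}` is block diagonal
(vanishing first row tail and first column tail) for all small `t`. -/
theorem stmt15 (n : ℕ) (hn : 2 ≤ n) (lam : ℂ) (hlam : lam ≠ 0) (halpha : lam ^ n ≠ 1)
    (A : ℂ → Matrix (Fin 1 ⊕ Fin (n - 1)) (Fin 1 ⊕ Fin (n - 1)) ℂ)
    (hAanalytic : ∀ i j, AnalyticAt ℂ (fun t => A t i j) 0)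
    (hAdet : ∀ t, (A t).det = 1)
    (hA0 : A 0 = lam⁻¹ • Matrix.fromBlocks (Matrix.of fun _ _ => lam ^ n) 0 0
      (Jmat (n - 1))) :
    ∃ ε > (0 : ℝ),
      ∃ C : ℂ → Matrix (Fin 1 ⊕ Fin (n - 1)) (Fin 1 ⊕ Fin (n - 1)) ℂ,
        C 0 = 1
        ∧ (∀ i j, ∀ t ∈ Metric.ball (0 : ℂ) ε, AnalyticAt ℂ (fun s => C s i j) t)
        ∧ (∀ t ∈ Metric.ball (0 : ℂ) ε, (C t).det = 1)
        ∧ (∀ t ∈ Metric.ball (0 : ℂ) ε,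
            (∀ i : Fin (n - 1), (C t * A t * (C t)⁻¹) (Sum.inr i) (Sum.inl 0) = 0)
            ∧ (∀ j : Fin (n - 1), (C t * A t * (C t)⁻¹) (Sum.inl 0) (Sum.inr j) = 0)) :=
  stmt15_general n lam hlam halpha A hAanalytic hA0

end
end
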